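/- arXiv:1906.00581 — 3 statements merged into one kernel-verified Lean document; each statement's English description precedes it below -/
import Mathlib

section
/- Let ψ: ℝ → ℝ be continuously differentiable, concave, and strictly increasing on [0,c], and p > 0. Let θ^NS be a maximizer over [0,c] of f(x) = ψ(x) + ψ(c-x) - p·x, and let θ^NN be a maximizer over [0,c] of d(x) = ψ(x) + ψ(c-x) - p·c. Then θ^NS ≤ θ^NN. -/
/-- θ^NS ≤ θ^NN, where θ^NS maximizes f(x) = ψ(x)+ψ(c-x)-p·x and
θ^NN maximizes d(x) = ψ(x)+ψ(c-x)-p·c over [0,c]. -/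
theorem theta_NS_le_theta_NN (ψ : ℝ → ℝ) (c p : ℝ) (hc : 0 < c) (hp : 0 < p)
    (hψdiff : ContDiff ℝ 1 ψ)
    (hψconc : ConcaveOn ℝ (Set.Icc 0 c) ψ)
    (hψmono : StrictMonoOn ψ (Set.Icc 0 c))
    (θNS θNN : ℝ) (hNSmem : θNS ∈ Set.Icc 0 c) (hNNmem : θNN ∈ Set.Icc 0 c)
    (hNSmax : IsMaxOn (fun x => ψ x + ψ (c - x) - p * x) (Set.Icc 0 c) θNS)
    (hNNmax : IsMaxOn (fun x => ψ x + ψ (c - x) - p * c) (Set.Icc 0 c) θNN) :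
    θNS ≤ θNN := by
  have h1 := hNNmax hNSmem
  have h2 := hNSmax hNNmem
  simp only [Set.mem_setOf_eq] at h1 h2
  nlinarith [h1, h2, hp]
end

section
/- Fix p, c > 0 and positive quantities θ₁^{SN}, θ₂^{SN}, θ₁^{NN}, θ₂^{NN}, α, γ, δ, ρ with θ₁^{SN}+θ₂^{SN} ≤ c. Suppose market shares x_{NN}(t), x_{SN}(t), x_{SS}(t) are given by x_{NN}(t)=1/2, x_{SN}(t)=1/2 + Δ₁/(2t), x_{SS}(t)=1/2 + Δ₂/(2t), where Δ₂ ≥ Δ₁ > 0. For each t, let a'(t) solve x_{NN}(t)·p·(θ₁^{NN}+θ₂^{NN}) = x_{SN}(t)·(p·θ₂^{SN} + a·α·θ₁^{SN}) and a''(t) solve x_{NN}(t)·p·(θ₁^{NN}+θ₂^{NN}) = x_{SS}(t)·a·c·min(γ,ρδ). Then a_S(t) = min(a'(t), a''(t)) is a nondecreasing function of t. -/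
/-- Auxiliary: from two crossing equations with shrinking market share,
the threshold increases. -/
lemma aux_threshold (A B K s₁ s₂ u v : ℝ) (hA : 0 ≤ A) (hB : 0 < B) (hK : 0 < K)
    (hs₂ : 0 < s₂) (hle : s₂ ≤ s₁)
    (e₁ : s₁ * (A + u * B) = K) (e₂ : s₂ * (A + v * B) = K) : u ≤ v := by
  have hs₁ : 0 < s₁ := lt_of_lt_of_le hs₂ hle
  have hv : 0 < A + v * B := by
    by_contra h
    push_neg at h
    nlinarith
  by_contra h
  push_neg at h
  have huv : A + v * B < A + u * B := by nlinarith
  nlinarith [mul_lt_mul_of_pos_left huv hs₂, mul_le_mul_of_nonneg_right hle (le_of_lt (lt_trans hv huv))]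

/-- the sponsorship threshold a_S(t) = min(a'(t), a''(t)) is a
nondecreasing function of the stickiness parameter t. -/
theorem threshold_increasing_in_t (p c θ1SN θ2SN θ1NN θ2NN α γ δ ρ Δ1 Δ2 : ℝ)
    (hp : 0 < p) (hc : 0 < c)
    (h1 : 0 < θ1SN) (h2 : 0 < θ2SN) (h3 : 0 < θ1NN) (h4 : 0 < θ2NN)
    (hα : 0 < α) (hγ : 0 < γ) (hδ : 0 < δ) (hρ : 0 < ρ)
    (hsum : θ1SN + θ2SN ≤ c)
    (hΔ1 : 0 < Δ1) (hΔ12 : Δ1 ≤ Δ2)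
    (xNN xSN xSS a' a'' aS : ℝ → ℝ)
    (hxNN : ∀ t, xNN t = 1 / 2)
    (hxSN : ∀ t, xSN t = 1 / 2 + Δ1 / (2 * t))
    (hxSS : ∀ t, xSS t = 1 / 2 + Δ2 / (2 * t))
    (ha' : ∀ t, 0 < t →
      xNN t * p * (θ1NN + θ2NN) = xSN t * (p * θ2SN + a' t * α * θ1SN))
    (ha'' : ∀ t, 0 < t →
      xNN t * p * (θ1NN + θ2NN) = xSS t * (a'' t) * c * min γ (ρ * δ))
    (haS : ∀ t, aS t = min (a' t) (a'' t)) :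
    ∀ t₁ t₂ : ℝ, 0 < t₁ → t₁ ≤ t₂ → aS t₁ ≤ aS t₂ := by
  intro t₁ t₂ ht₁ hle
  have ht₂ : 0 < t₂ := lt_of_lt_of_le ht₁ hle
  have hK : 0 < 1 / 2 * p * (θ1NN + θ2NN) := by positivity
  have hm : 0 < min γ (ρ * δ) := lt_min hγ (by positivity)
  -- monotone decreasing market shares
  have hmono : ∀ Δ : ℝ, 0 < Δ →
      (0 < 1 / 2 + Δ / (2 * t₂)) ∧ (1 / 2 + Δ / (2 * t₂) ≤ 1 / 2 + Δ / (2 * t₁)) := by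
    intro Δ hΔ
    constructor
    · positivity
    · have : Δ / (2 * t₂) ≤ Δ / (2 * t₁) :=
        div_le_div_of_nonneg_left (le_of_lt hΔ) (by positivity) (by linarith)
      linarith
  obtain ⟨hs2pos, hsle⟩ := hmono Δ1 hΔ1
  obtain ⟨hS2pos, hSle⟩ := hmono Δ2 (lt_of_lt_of_le hΔ1 hΔ12)
  -- a' monotone
  have e1 := ha' t₁ ht₁; have e2 := ha' t₂ ht₂
  rw [hxNN, hxSN] at e1 e2
  have hA' : a' t₁ ≤ a' t₂ := by
    apply aux_threshold (p * θ2SN) (α * θ1SN) (1 / 2 * p * (θ1NN + θ2NN))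
      (1 / 2 + Δ1 / (2 * t₁)) (1 / 2 + Δ1 / (2 * t₂)) (a' t₁) (a' t₂)
      (by positivity) (by positivity) hK hs2pos hsle
    · linarith [e1]
    · linarith [e2]
  -- a'' monotone
  have f1 := ha'' t₁ ht₁; have f2 := ha'' t₂ ht₂
  rw [hxNN, hxSS] at f1 f2
  have hA'' : a'' t₁ ≤ a'' t₂ := by
    apply aux_threshold 0 (c * min γ (ρ * δ)) (1 / 2 * p * (θ1NN + θ2NN))
      (1 / 2 + Δ2 / (2 * t₁)) (1 / 2 + Δ2 / (2 * t₂)) (a'' t₁) (a'' t₂)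
      le_rfl (by positivity) hK hS2pos hSle
    · linarith [f1]
    · linarith [f2]
  rw [haS t₁, haS t₂]
  exact min_le_min hA' hA''
end

section
/- Let p, c > 0 and θ₁^{SN}, θ₁^{NN} with 0 < θ₁^{NN} < θ₁^{SN} ≤ c. Define a_{SN} = p·θ₁^{SN}/(θ₁^{SN} − θ₁^{NN}) and, for a > 0, r^{SN}(a) = (1/2)·(a·(θ₁^{SN} − θ₁^{NN}) + p·(c − θ₁^{SN})). Then for all a > a_{SN}, r^{SN}(a) > (1/2)·p·c, and for any x ≤ 1/2 and any θ₁, θ₂ ≥ 0 with θ₁ + θ₂ ≤ c, the NN-deviation profit x·p·(θ₁ + θ₂) ≤ (1/2)·p·c < r^{SN}(a). -/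
/-- for a > a_{SN}, ISP 1's symmetric-SN profit exceeds (1/2)pc,
which dominates any NN-deviation profit. -/
theorem sn_sn_no_nn_deviation (p c θ1SN θ1NN aSN : ℝ)
    (hp : 0 < p) (hc : 0 < c)
    (h1 : 0 < θ1NN) (h2 : θ1NN < θ1SN) (h3 : θ1SN ≤ c)
    (haSN : aSN = p * θ1SN / (θ1SN - θ1NN))
    (rSN : ℝ → ℝ)
    (hr : ∀ a, rSN a = (1 / 2) * (a * (θ1SN - θ1NN) + p * (c - θ1SN))) :
    ∀ a : ℝ, aSN < a →
      (1 / 2) * p * c < rSN a ∧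
      ∀ x θ1 θ2 : ℝ, x ≤ 1 / 2 → 0 ≤ θ1 → 0 ≤ θ2 → θ1 + θ2 ≤ c →
        x * p * (θ1 + θ2) ≤ (1 / 2) * p * c := by
  intro a ha
  have hd : 0 < θ1SN - θ1NN := by linarith
  have key : p * θ1SN < a * (θ1SN - θ1NN) := by
    rw [haSN, div_lt_iff₀ hd] at ha
    linarith
  constructor
  · rw [hr]; nlinarith
  · intro x θ1 θ2 hx h1' h2' hsum
    nlinarith [mul_nonneg (le_of_lt hp) (add_nonneg h1' h2')]
end
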